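/- Let h be an orientation-preserving homeomorphism of ℝ supported on an open interval I contained in a fundamental domain of b ∈ Homeo₊(ℝ) (i.e., bⁿ(I) ∩ I = ∅ for n ≠ 0). Then the infinite product h₁ = ∏_{n∈ℤ} bⁿ h b⁻ⁿ is a well-defined homeomorphism of ℝ, supported on ⋃ₙ bⁿ(I), which commutes with b. -/

import Mathlib

/-!
Since the translates `S n = bⁿ '' I` are pairwise disjoint and `fₙ = bⁿ h b⁻ⁿ` moves only points
of `S n` (hence maps `S n` onto itself), the product is the map acting as `fₙ` on `S n` and as the
identity off `⋃ n, S n`; its inverse is the same construction for the `fₙ⁻¹`. For `x < y` lying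
in different translates `S i`, `S j`, the factor `fᵢ` fixes `y` and `fⱼ` fixes `fᵢ x`, so the
product sends them to `fⱼ (fᵢ x) < fⱼ (fᵢ y)`, which gives strict monotonicity. Conjugating by `b`
shifts both the translates and the factors by one index, so the product commutes with `b`.
-/

open MulAction Function

namespace Equiv.Perm

variable {α ι : Type*}

variable (α) in
def strictMonoSubgroup [LinearOrder α] : Subgroup (Perm α) where
  carrier := {e | StrictMono e}
  mul_mem' ha hb := ha.comp hb
  one_mem' := strictMono_id
  inv_mem' {e} he x y hxy := he.lt_iff_lt.1 (by simpa using hxy)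

theorem apply_eq_self_of_movedBy_subset {e : Perm α} {s : Set α} (he : (fixedBy α e)ᶜ ⊆ s)
    {x : α} (hx : x ∉ s) : e x = x :=
  not_not.mp fun hmoved => hx (he hmoved)

theorem apply_mem_iff_of_movedBy_subset {e : Perm α} {s : Set α} (he : (fixedBy α e)ᶜ ⊆ s)
    {x : α} : e x ∈ s ↔ x ∈ s :=
  smul_mem_of_set_mem_fixedBy (set_mem_fixedBy_of_movedBy_subset he)

theorem movedBy_conj_subset {e : Perm α} (g : Perm α) {s : Set α} (he : (fixedBy α e)ᶜ ⊆ s) :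
    (fixedBy α (g * e * g⁻¹))ᶜ ⊆ g '' s := by
  intro x hx
  refine ⟨g⁻¹ x, he fun hfix => hx ?_, g.apply_symm_apply x⟩
  change g (e (g⁻¹ x)) = x
  rw [show e (g⁻¹ x) = g⁻¹ x from hfix]
  exact g.apply_symm_apply x

theorem pairwise_disjoint_zpow_image (b : Perm α) {I : Set α}
    (hdisj : ∀ n : ℤ, n ≠ 0 → ⇑(b ^ n) '' I ∩ I = ∅) :
    Pairwise (_root_.Disjoint on fun n : ℤ => ⇑(b ^ n) '' I) := by
  intro m n hmn
  have hm : ⇑(b ^ m) '' I = ⇑(b ^ n) '' (⇑(b ^ (m - n)) '' I) := by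
    rw [← Set.image_comp, ← coe_mul, ← zpow_add, add_sub_cancel]
  rw [onFun_apply, hm, Set.disjoint_image_iff (b ^ n).injective, Set.disjoint_iff_inter_eq_empty]
  exact hdisj _ (sub_ne_zero.2 hmn)

open Classical in
noncomputable def disjointProdFun (S : ι → Set α) (f : ι → Perm α) (x : α) : α :=
  if hx : ∃ i, x ∈ S i then f hx.choose x else x

section disjointProd

variable {S : ι → Set α} {f : ι → Perm α} {x : α}

theorem disjointProdFun_of_mem (hS : Pairwise (_root_.Disjoint on S)) {i : ι} (hx : x ∈ S i) :
    disjointProdFun S f x = f i x := by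
  have hex : ∃ j, x ∈ S j := ⟨i, hx⟩
  rw [disjointProdFun, dif_pos hex,
    subsingleton_setOfPred_mem_iff_pairwise_disjoint.2 hS x hex.choose_spec hx]

theorem disjointProdFun_of_forall_notMem (hx : ∀ i, x ∉ S i) : disjointProdFun S f x = x := by
  rw [disjointProdFun, dif_neg (not_exists.2 hx)]

theorem movedBy_disjointProdFun_subset : {x | disjointProdFun S f x ≠ x} ⊆ ⋃ i, S i := by
  intro x hx
  by_contra hout
  exact hx (disjointProdFun_of_forall_notMem (by simpa using hout))

variable (hS : Pairwise (_root_.Disjoint on S)) (hf : ∀ i, (fixedBy α (f i))ᶜ ⊆ S i)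
include hS hf

theorem disjointProdFun_inv_apply (x : α) :
    disjointProdFun S (fun i => (f i)⁻¹) (disjointProdFun S f x) = x := by
  by_cases hx : ∃ i, x ∈ S i
  · obtain ⟨i, hi⟩ := hx
    rw [disjointProdFun_of_mem hS hi,
      disjointProdFun_of_mem hS ((apply_mem_iff_of_movedBy_subset (hf i)).2 hi)]
    exact (f i).symm_apply_apply x
  · rw [disjointProdFun_of_forall_notMem (not_exists.1 hx),
      disjointProdFun_of_forall_notMem (not_exists.1 hx)]

noncomputable def disjointProd : Perm α where
  toFun := disjointProdFun S f
  invFun := disjointProdFun S fun i => (f i)⁻¹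
  left_inv := disjointProdFun_inv_apply hS hf
  right_inv x := by
    simpa using disjointProdFun_inv_apply (f := fun i => (f i)⁻¹) hS
      (fun i => fixedBy_inv α (f i) ▸ hf i) x

theorem disjointProdFun_lt_of_mem_of_ne [LinearOrder α] (hmono : ∀ i, StrictMono (f i))
    {i j : ι} {y : α} (hx : x ∈ S i) (hy : y ∈ S j) (hij : i ≠ j) (hxy : x < y) :
    disjointProdFun S f x < disjointProdFun S f y := by
  have hfix_y : f i y = y :=
    apply_eq_self_of_movedBy_subset (hf i) (Set.disjoint_right.1 (hS hij) hy)
  have hfix_fx : f j (f i x) = f i x :=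
    apply_eq_self_of_movedBy_subset (hf j)
      (Set.disjoint_left.1 (hS hij) ((apply_mem_iff_of_movedBy_subset (hf i)).2 hx))
  calc disjointProdFun S f x = f j (f i x) := by rw [disjointProdFun_of_mem hS hx, hfix_fx]
    _ < f j y := hmono j (hfix_y ▸ hmono i hxy)
    _ = disjointProdFun S f y := (disjointProdFun_of_mem hS hy).symm

theorem disjointProdFun_strictMono [LinearOrder α] (hmono : ∀ i, StrictMono (f i)) :
    StrictMono (disjointProdFun S f) := by
  intro x y hxy
  by_cases hx : ∃ i, x ∈ S i <;> by_cases hy : ∃ j, y ∈ S j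
  · obtain ⟨i, hi⟩ := hx
    obtain ⟨j, hj⟩ := hy
    rcases eq_or_ne i j with rfl | hij
    · rw [disjointProdFun_of_mem hS hi, disjointProdFun_of_mem hS hj]
      exact hmono i hxy
    · exact disjointProdFun_lt_of_mem_of_ne hS hf hmono hi hj hij hxy
  · obtain ⟨i, hi⟩ := hx
    push Not at hy
    rw [disjointProdFun_of_mem hS hi, disjointProdFun_of_forall_notMem hy,
      ← apply_eq_self_of_movedBy_subset (hf i) (hy i)]
    exact hmono i hxy
  · obtain ⟨j, hj⟩ := hy
    push Not at hx
    rw [disjointProdFun_of_mem hS hj, disjointProdFun_of_forall_notMem hx,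
      ← apply_eq_self_of_movedBy_subset (hf j) (hx j)]
    exact hmono j hxy
  · push Not at hx hy
    rwa [disjointProdFun_of_forall_notMem hx, disjointProdFun_of_forall_notMem hy]

omit hf in
theorem disjointProdFun_apply_of_equivariant (g : Perm α) {σ : ι → ι} (hσ : Surjective σ)
    (hgS : ∀ i, S (σ i) = g '' S i) (hgf : ∀ i, f (σ i) = g * f i * g⁻¹) (x : α) :
    disjointProdFun S f (g x) = g (disjointProdFun S f x) := by
  by_cases hx : ∃ i, x ∈ S i
  · obtain ⟨i, hi⟩ := hx
    have hgx : g x ∈ S (σ i) := hgS i ▸ Set.mem_image_of_mem g hi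
    rw [disjointProdFun_of_mem hS hgx, disjointProdFun_of_mem hS hi, hgf]
    simp
  · have hgx : ∀ j, g x ∉ S j := by
      intro j hj
      obtain ⟨i, rfl⟩ := hσ j
      rw [hgS, g.injective.mem_set_image] at hj
      exact hx ⟨i, hj⟩
    rw [disjointProdFun_of_forall_notMem hgx, disjointProdFun_of_forall_notMem (not_exists.1 hx)]

end disjointProd

end Equiv.Perm

open Equiv Perm

theorem infinite_product_commuting_general (b : Equiv.Perm ℝ) (hb : StrictMono ⇑b)
    (I : Set ℝ)
    (hdisj : ∀ n : ℤ, n ≠ 0 → (⇑(b ^ n) '' I) ∩ I = ∅)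
    (h : Equiv.Perm ℝ) (hh : StrictMono ⇑h)
    (hsupp : {x : ℝ | h x ≠ x} ⊆ I) :
    ∃ h₁ : Equiv.Perm ℝ, StrictMono ⇑h₁ ∧
      (∀ (n : ℤ), ∀ x ∈ ⇑(b ^ n) '' I, h₁ x = (b ^ n) (h ((b ^ n).symm x))) ∧
      {x : ℝ | h₁ x ≠ x} ⊆ (⋃ n : ℤ, ⇑(b ^ n) '' I) ∧
      ∀ x : ℝ, h₁ (b x) = b (h₁ x) := by
  set S : ℤ → Set ℝ := fun n => ⇑(b ^ n) '' I
  set f : ℤ → Perm ℝ := fun n => b ^ n * h * (b ^ n)⁻¹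
  have hS : Pairwise (_root_.Disjoint on S) := pairwise_disjoint_zpow_image b hdisj
  have hf : ∀ n, (fixedBy ℝ (f n))ᶜ ⊆ S n := fun n => movedBy_conj_subset _ hsupp
  have hbn (n : ℤ) : b ^ n ∈ strictMonoSubgroup ℝ := zpow_mem (show b ∈ _ from hb) n
  have hmono (n : ℤ) : f n ∈ strictMonoSubgroup ℝ :=
    mul_mem (mul_mem (hbn n) (show h ∈ _ from hh)) (inv_mem (hbn n))
  refine ⟨disjointProd hS hf, disjointProdFun_strictMono hS hf hmono,
    fun n x hx => disjointProdFun_of_mem hS hx, movedBy_disjointProdFun_subset,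
    disjointProdFun_apply_of_equivariant hS b (add_left_surjective 1) (fun n => ?_) (fun n => ?_)⟩
  · simp only [S, zpow_one_add, coe_mul, Set.image_comp]
  · simp only [f, zpow_one_add, mul_inv_rev, mul_assoc]

theorem infinite_product_commuting (b : Equiv.Perm ℝ) (hb : StrictMono ⇑b)
    (I : Set ℝ) (hI : IsOpen I)
    (hdisj : ∀ n : ℤ, n ≠ 0 → (⇑(b ^ n) '' I) ∩ I = ∅)
    (h : Equiv.Perm ℝ) (hh : StrictMono ⇑h)
    (hsupp : {x : ℝ | h x ≠ x} ⊆ I) :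
    ∃ h₁ : Equiv.Perm ℝ, StrictMono ⇑h₁ ∧
      (∀ (n : ℤ), ∀ x ∈ ⇑(b ^ n) '' I, h₁ x = (b ^ n) (h ((b ^ n).symm x))) ∧
      {x : ℝ | h₁ x ≠ x} ⊆ (⋃ n : ℤ, ⇑(b ^ n) '' I) ∧
      ∀ x : ℝ, h₁ (b x) = b (h₁ x) :=
  infinite_product_commuting_general b hb I hdisj h hh hsupp
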